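/- For all integers k ≥ 1 and n ≥ 1, ψ(k,n) = φ(k+1,n): there is a bijection between isomorphism classes of untwisted fission trees of slope k and rank n (with arbitrary multiplicities) and isomorphism classes of multiplicity-one untwisted fission trees (fission chains) of slope exactly k+1 with n leaves. -/

import Mathlib

/-- A fission chain of slope `≤ k` with `n` leaves: a chain of surjective maps of
finite sets `J₁ ↠ J₂ ↠ ⋯ ↠ J_{k+1}` with `|J₁| = n` and `|J_{k+1}| = 1`.
We encode `J_{i+1} := Fin (size i)`; the chain is prolonged trivially above
height `k+1` (all later sets necessarily also have one element, since all the
maps are surjective). -/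
structure FChain (k n : ℕ) where
  size : ℕ → ℕ
  map : ∀ i, Fin (size i) → Fin (size (i+1))
  surj : ∀ i, Function.Surjective (map i)
  size_zero : size 0 = n
  size_top : size k = 1

/-- A fission chain of slope `≤ k` has slope exactly `k` if `k = 0` or `|J_k| ≥ 2`
(here `J_k = Fin (size (k-1))`). -/
def FChain.ExactSlope {k n : ℕ} (c : FChain k n) : Prop :=
  k = 0 ∨ 2 ≤ c.size (k - 1)

/-- Isomorphism of fission chains: bijections between the corresponding sets
commuting with all the maps. -/
def FChain.Iso {k n m : ℕ} (c : FChain k n) (d : FChain k m) : Prop :=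
  ∃ e : ∀ i, Fin (c.size i) ≃ Fin (d.size i),
    ∀ i x, e (i+1) (c.map i x) = d.map i (e i x)

/-- `Φ(k,n)`: the number of isomorphism classes of fission chains of slope `≤ k`
with `n` leaves. -/
noncomputable def PhiBig (k n : ℕ) : ℕ :=
  Nat.card (Quot (fun c d : FChain k n => c.Iso d))

/-- `φ(k,n)`: the number of isomorphism classes of fission chains of slope
exactly `k` with `n` leaves. -/
noncomputable def phi (k n : ℕ) : ℕ :=
  Nat.card (Quot (fun c d : {c : FChain k n // c.ExactSlope} => c.1.Iso d.1))

/-- An untwisted fission tree of slope `k` and rank `n`: a fission chain of slope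
exactly `k` together with a multiplicity map `μ : J₁ → ℤ_{≥1}` with `Σ μ = n`. -/
structure FTree (k n : ℕ) where
  leaves : ℕ
  chain : FChain k leaves
  exact : chain.ExactSlope
  mult : Fin (chain.size 0) → ℕ
  mult_pos : ∀ i, 1 ≤ mult i
  mult_sum : ∑ i, mult i = n

/-- Isomorphism of untwisted fission trees: an isomorphism of the underlying
chains intertwining the multiplicity maps. -/
def FTree.Iso {k n : ℕ} (T U : FTree k n) : Prop :=
  ∃ e : ∀ i, Fin (T.chain.size i) ≃ Fin (U.chain.size i),
    (∀ i x, e (i+1) (T.chain.map i x) = U.chain.map i (e i x)) ∧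
    (∀ x, U.mult (e 0 x) = T.mult x)

/-- `ψ(k,n)`: the number of isomorphism classes of untwisted fission trees of
slope `k` and rank `n`. -/
noncomputable def psi (k n : ℕ) : ℕ :=
  Nat.card (Quot (fun T U : FTree k n => T.Iso U))

-- auxiliary

def shiftSize (n : ℕ) (s : ℕ → ℕ) : ℕ → ℕ
  | 0 => n
  | i+1 => s i

noncomputable def muEquiv {L n : ℕ} (μ : Fin L → ℕ) (h : ∑ j, μ j = n) :
    ((j : Fin L) × Fin (μ j)) ≃ Fin n :=
  Fintype.equivFinOfCardEq (by simp [h])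

noncomputable def treeMap {k n : ℕ} (T : FTree k n) :
    ∀ i, Fin (shiftSize n T.chain.size i) → Fin (shiftSize n T.chain.size (i+1))
  | 0 => fun x => ((muEquiv T.mult T.mult_sum).symm x).1
  | i+1 => T.chain.map i

lemma treeMap_surj {k n : ℕ} (T : FTree k n) : ∀ i, Function.Surjective (treeMap T i)
  | 0 => fun j => ⟨muEquiv T.mult T.mult_sum ⟨j, ⟨0, T.mult_pos j⟩⟩, by simp [treeMap]⟩
  | i+1 => T.chain.surj i

noncomputable def fchainOfTree {k n : ℕ} (T : FTree k n) : FChain (k+1) n where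
  size := shiftSize n T.chain.size
  map := treeMap T
  surj := treeMap_surj T
  size_zero := rfl
  size_top := T.chain.size_top

lemma fchainOfTree_exact {k n : ℕ} (hk : 1 ≤ k) (T : FTree k n) :
    (fchainOfTree T).ExactSlope := by
  right
  rcases T.exact with h | h
  · exact absurd h (by omega)
  · obtain ⟨m, rfl⟩ : ∃ m, k = m + 1 := ⟨k - 1, by omega⟩
    exact h

def treeChain {k n : ℕ} (d : FChain (k+1) n) : FChain k (d.size 1) where
  size i := d.size (i+1)
  map i := d.map (i+1)
  surj i := d.surj (i+1)
  size_zero := rfl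
  size_top := d.size_top

noncomputable def treeOfChain {k n : ℕ} (hk : 1 ≤ k) (d : FChain (k+1) n)
    (hd : d.ExactSlope) : FTree k n where
  leaves := d.size 1
  chain := treeChain d
  exact := by
    right
    rcases hd with h | h
    · exact absurd h (by omega)
    · obtain ⟨m, rfl⟩ : ∃ m, k = m + 1 := ⟨k - 1, by omega⟩
      exact h
  mult (j : Fin (d.size 1)) := Fintype.card {x // d.map 0 x = j}
  mult_pos (j : Fin (d.size 1)) := by
    obtain ⟨x, hx⟩ := d.surj 0 j
    exact Fintype.card_pos_iff.2 ⟨⟨x, hx⟩⟩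
  mult_sum := by
    have h1 : ∑ j : Fin (d.size 1), Fintype.card {x // d.map 0 x = j} = n := by
      rw [← Fintype.card_sigma, Fintype.card_congr (Equiv.sigmaFiberEquiv (d.map 0))]
      simp [d.size_zero]
    exact h1

def fiberEquivAux {L : ℕ} (μ : Fin L → ℕ) (j : Fin L) :
    {y : (j' : Fin L) × Fin (μ j') // y.1 = j} ≃ Fin (μ j) where
  toFun y := finCongr (congrArg μ y.2) y.1.2
  invFun a := ⟨⟨j, a⟩, rfl⟩
  left_inv := by rintro ⟨⟨j', a⟩, h⟩; dsimp at h; subst h; rfl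
  right_inv a := rfl

lemma iso_fchain {k n : ℕ} {T U : FTree k n} (h : T.Iso U) :
    (fchainOfTree T).Iso (fchainOfTree U) := by
  obtain ⟨e, hcomm, hmult⟩ := h
  refine ⟨fun i => match i with
    | 0 => (muEquiv T.mult T.mult_sum).symm.trans
        ((Equiv.sigmaCongr (e 0) (fun j => finCongr (hmult j).symm)).trans
          (muEquiv U.mult U.mult_sum))
    | i+1 => e i, fun i x => ?_⟩
  match i with
  | 0 =>
    show e 0 (treeMap T 0 x) = treeMap U 0 _
    simp only [treeMap, Equiv.trans_apply, Equiv.symm_apply_apply, Equiv.sigmaCongr,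
      Equiv.sigmaCongrRight_apply, Equiv.sigmaCongrLeft_apply]
    exact (congrArg Sigma.fst ((muEquiv U.mult U.mult_sum).symm_apply_apply
      ⟨(e 0) ((muEquiv T.mult T.mult_sum).symm x).fst,
        (finCongr (hmult ((muEquiv T.mult T.mult_sum).symm x).fst).symm)
          ((muEquiv T.mult T.mult_sum).symm x).snd⟩)).symm
  | i+1 => exact hcomm i x

lemma iso_tree {k n : ℕ} (hk : 1 ≤ k) {d d' : FChain (k+1) n}
    (hd : d.ExactSlope) (hd' : d'.ExactSlope) (h : d.Iso d') :
    (treeOfChain hk d hd).Iso (treeOfChain hk d' hd') := by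
  obtain ⟨e, hcomm⟩ := h
  refine ⟨fun i => e (i+1), fun i x => hcomm (i+1) x, fun (x : Fin (d.size 1)) => ?_⟩
  show Fintype.card {y // d'.map 0 y = e 1 x} = Fintype.card {y // d.map 0 y = x}
  refine (Fintype.card_congr (Equiv.subtypeEquiv (e 0) (fun y => ?_))).symm
  constructor
  · intro hp
    exact (hcomm 0 y).symm.trans (congrArg (e 1) hp)
  · intro hq
    exact (e 1).injective ((hcomm 0 y).trans hq)

lemma tree_roundtrip {k n : ℕ} (hk : 1 ≤ k) (T : FTree k n) :
    (treeOfChain hk (fchainOfTree T) (fchainOfTree_exact hk T)).Iso T := by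
  refine ⟨fun i => Equiv.refl _, fun i x => rfl, fun (x : Fin (T.chain.size 0)) => ?_⟩
  show T.mult x = Fintype.card {y : Fin n // ((muEquiv T.mult T.mult_sum).symm y).1 = x}
  rw [Fintype.card_congr ((Equiv.subtypeEquiv (muEquiv T.mult T.mult_sum).symm
    (fun y => Iff.rfl)).trans (fiberEquivAux T.mult x))]
  simp

lemma chain_roundtrip {k n : ℕ} (hk : 1 ≤ k) (d : FChain (k+1) n) (hd : d.ExactSlope) :
    (fchainOfTree (treeOfChain hk d hd)).Iso d := by
  refine ⟨fun i => match i with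
    | 0 => (muEquiv (treeOfChain hk d hd).mult (treeOfChain hk d hd).mult_sum).symm.trans
        ((Equiv.sigmaCongrRight (fun j => (Fintype.equivFin {x // d.map 0 x = j}).symm)).trans
          (Equiv.sigmaFiberEquiv (d.map 0)))
    | i+1 => Equiv.refl _, fun i x => ?_⟩
  match i with
  | 0 =>
    show (treeMap (treeOfChain hk d hd) 0 x : Fin (d.size 1)) = d.map 0 _
    simp only [treeMap, Equiv.trans_apply, Equiv.sigmaCongrRight_apply]
    exact (((Fintype.equivFin {y // d.map 0 y = _}).symm _).2).symm
  | i+1 => rfl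


/-- ψ(k,n) = φ(k+1,n): the number of isomorphism classes of untwisted fission
trees of slope k and rank n equals the number of isomorphism classes of
multiplicity-one untwisted fission trees (fission chains) of slope exactly k+1
with n leaves. -/
theorem psi_eq_phi_succ (k n : ℕ) (hk : 1 ≤ k) (hn : 1 ≤ n) :
    psi k n = phi (k+1) n := by
  unfold psi phi
  apply Nat.card_congr
  exact {
    toFun := Quot.lift
      (fun T => Quot.mk _ (⟨fchainOfTree T, fchainOfTree_exact hk T⟩ :
        {c : FChain (k+1) n // c.ExactSlope}))
      (fun T U h => Quot.sound (iso_fchain h))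
    invFun := Quot.lift (fun c => Quot.mk _ (treeOfChain hk c.1 c.2))
      (fun c d h => Quot.sound (iso_tree hk c.2 d.2 h))
    left_inv := by
      intro q
      induction q using Quot.ind with
      | _ T => exact Quot.sound (tree_roundtrip hk T)
    right_inv := by
      intro q
      induction q using Quot.ind with
      | _ c =>
        obtain ⟨d, hd⟩ := c
        exact Quot.sound (chain_roundtrip hk d hd) }
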